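/- arXiv:2201.11149 — 4 statements merged into one kernel-verified Lean document; each statement's English description precedes it below -/
import Mathlib

section
/- Let n₁,…,n_m be positive integers summing to T, and for i ∈ [m], k ∈ [nᵢ] let B_{i,k} be T × T complex diagonal matrices such that all square submatrices of Bᵢ = [B_{i,1}𝟙,…,B_{i,nᵢ}𝟙] are invertible. Let Ξ₁,…,Ξ_m be independent random vectors in ℂ^T whose real and imaginary coordinate parts are i.i.d. with a distribution absolutely continuous w.r.t. Lebesgue measure. Then, with probability 1, the T × T matrix Λ = [A₁,…,A_m], where Aᵢ = [B_{i,1}Ξᵢ,…,B_{i,nᵢ}Ξᵢ], is invertible. -/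
/-!
Since every `B_{i,k}` is diagonal, the entry `(t, (i,k))` of `Λ` is `(B_{i,k})_{tt} (Ξᵢ)_t`, so
`det Λ` is a polynomial in the `mT` complex coordinates of `Ξ₁, …, Ξ_m`. It is not the zero
polynomial: when `Ξᵢ` is the indicator of the rows `e(i, ·)`, reordering rows and columns by `e`
makes `Λ` block diagonal, with diagonal blocks the square submatrices of the `Bᵢ` on the rows
`e(i, ·)`, which are invertible. A nonzero polynomial vanishes only on a null set of a product of
measures without atoms (by induction on the number of variables, almost every slice is a nonzero
univariate polynomial, with finitely many roots), and the law of each complex coordinate has no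
atoms because `ν ≪ volume`.
-/

open MeasureTheory

namespace MvPolynomial

theorem measurable_eval {R σ : Type*} [CommSemiring R] [MeasurableSpace R] [MeasurableAdd₂ R]
    [MeasurableMul₂ R] (p : MvPolynomial σ R) : Measurable fun x : σ → R => eval x p := by
  induction p using MvPolynomial.induction_on with
  | C a => simp only [eval_C, measurable_const]
  | add p q hp hq => simp only [map_add]; exact hp.add hq
  | mul_X p i hp => simp only [map_mul, eval_X]; exact hp.mul (measurable_pi_apply i)

variable {K : Type*} [CommRing K] [IsDomain K] [MeasurableSpace K] [MeasurableSingletonClass K]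
  [MeasurableAdd₂ K] [MeasurableMul₂ K]

theorem ae_eval_ne_zero_fin : ∀ {N : ℕ} (μ : Fin N → Measure K) [∀ i, SigmaFinite (μ i)]
    [∀ i, NullSingletonClass (μ i)] {p : MvPolynomial (Fin N) K}, p ≠ 0 →
    ∀ᵐ x ∂Measure.pi μ, eval x p ≠ 0
  | 0, μ, _, _, p, hp => by
    refine .of_forall fun x => ?_
    rw [eq_C_of_isEmpty p] at hp ⊢
    simpa using hp
  | N + 1, μ, _, _, p, hp => by
    set q := finSuccEquiv K N p
    have hq : q ≠ 0 := (map_ne_zero_iff _ (finSuccEquiv K N).injective).2 hp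
    -- off a null set of `s`, evaluating the leading coefficient of `q` at `s` keeps it nonzero
    have hslice : ∀ᵐ s ∂Measure.pi fun j => μ (Fin.succAbove 0 j),
        ∀ᵐ a ∂μ 0, eval (Fin.cons a s) p ≠ 0 := by
      filter_upwards [ae_eval_ne_zero_fin _ (Polynomial.leadingCoeff_ne_zero.2 hq)] with s hs
      have hqs : q.map (eval s) ≠ 0 := fun h => hs <| by
        simpa [Polynomial.coeff_map] using congrArg (Polynomial.coeff · q.natDegree) h
      filter_upwards [(Polynomial.finite_setOfPred_isRoot hqs).countable.ae_notMem (μ 0)]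
        with a ha
      rwa [eval_eq_eval_mv_eval']
    have hcons : Measurable fun z : (Fin N → K) × K => (Fin.cons z.2 z.1 : Fin (N + 1) → K) :=
      measurable_pi_iff.2 <| Fin.cases (by simpa using measurable_snd)
        fun j => by simpa using measurable_fst.eval (a := j)
    have hmeas : MeasurableSet {z : (Fin N → K) × K | eval (Fin.cons z.2 z.1) p ≠ 0} :=
      (measurable_eval p).comp hcons (measurableSet_singleton 0).compl
    have hprod := Measure.measurePreserving_swap.quasiMeasurePreserving.ae
      ((Measure.ae_prod_iff_ae_ae hmeas).2 hslice)
    filter_upwards [(measurePreserving_piFinSuccAbove μ 0).quasiMeasurePreserving.ae hprod]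
      with x hx
    simpa [MeasurableEquiv.piFinSuccAbove_apply] using hx

theorem ae_eval_ne_zero {σ : Type*} [Fintype σ] (μ : σ → Measure K) [∀ i, SigmaFinite (μ i)]
    [∀ i, NullSingletonClass (μ i)] {p : MvPolynomial σ K} (hp : p ≠ 0) :
    ∀ᵐ x ∂Measure.pi μ, eval x p ≠ 0 := by
  set F := Fintype.equivFin σ
  have hF := (measurePreserving_piCongrLeft μ F.symm).symm
  filter_upwards [hF.quasiMeasurePreserving.ae <|
    ae_eval_ne_zero_fin _ ((rename_injective F F.injective).ne_iff' (map_zero _) |>.2 hp)]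
    with x hx
  simpa [eval_rename, Function.comp_def, MeasurableEquiv.piCongrLeft] using hx

theorem ae_det_map_eval_ne_zero {σ ι : Type*} [Fintype σ] [Fintype ι] [DecidableEq ι]
    (μ : σ → Measure K) [∀ i, SigmaFinite (μ i)] [∀ i, NullSingletonClass (μ i)]
    (P : Matrix ι ι (MvPolynomial σ K)) {x₀ : σ → K} (h₀ : (P.map (eval x₀)).det ≠ 0) :
    ∀ᵐ x ∂Measure.pi μ, (P.map (eval x)).det ≠ 0 := by
  have hP : P.det ≠ 0 := fun h => h₀ <| by
    rw [← RingHom.mapMatrix_apply, ← RingHom.map_det, h, map_zero]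
  filter_upwards [ae_eval_ne_zero μ hP] with x hx
  rwa [← RingHom.mapMatrix_apply, ← RingHom.map_det]

end MvPolynomial

theorem Matrix.det_blockDiagonal' {o R : Type*} {m : o → Type*} [Fintype o] [DecidableEq o]
    [∀ i, Fintype (m i)] [∀ i, DecidableEq (m i)] [CommRing R] (M : ∀ i, Matrix (m i) (m i) R) :
    (blockDiagonal' M).det = ∏ i, (M i).det := by
  let : LinearOrder o := LinearOrder.lift' _ (Fintype.equivFin o).injective
  rw [(blockTriangular_blockDiagonal' M).det_fintype]
  refine Finset.prod_congr rfl fun i _ => ?_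
  rw [← det_submatrix_equiv_self (Equiv.sigmaSubtype i).symm]
  congr 1
  ext a b
  simp [toSquareBlock_def, Equiv.sigmaSubtype]

theorem Matrix.IsDiag.mulVec_apply {n R : Type*} [Fintype n] [DecidableEq n]
    [NonUnitalNonAssocSemiring R] {A : Matrix n n R} (hA : A.IsDiag) (v : n → R) (t : n) :
    A.mulVec v t = A t t * v t := by
  conv_lhs => rw [← hA.diagonal_diag]
  rw [mulVec_diagonal, diag_apply]

theorem MeasureTheory.measurePreserving_uncurry {ι κ α : Type*} [Fintype ι] [Fintype κ]
    [MeasurableSpace α] (μ : ι → κ → Measure α) [∀ i j, SigmaFinite (μ i j)] :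
    MeasurePreserving Function.uncurry (Measure.pi fun i => Measure.pi (μ i))
      (Measure.pi fun p : ι × κ => μ p.1 p.2) := by
  have hmeas : Measurable (Function.uncurry : (ι → κ → α) → ι × κ → α) :=
    (MeasurableEquiv.curry ι κ α).symm.measurable
  refine ⟨hmeas, (Measure.pi_eq fun s hs => ?_).symm⟩
  rw [Measure.map_apply hmeas (.univ_pi hs)]
  have hpre : Function.uncurry ⁻¹' Set.univ.pi s =
      Set.univ.pi fun i => Set.univ.pi fun j => s (i, j) := by
    ext ω
    simp [Prod.forall]
  simp_rw [hpre, Measure.pi_pi, Fintype.prod_prod_type]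

theorem MeasureTheory.Measure.nullSingletonClass_map {α β : Type*} [MeasurableSpace α]
    [MeasurableSpace β] [MeasurableSingletonClass β] (μ : Measure α) [NullSingletonClass μ]
    {f : α → β} (hf : Measurable f) (hinj : Function.Injective f) :
    NullSingletonClass (μ.map f) where
  measure_singleton y := by
    rw [Measure.map_apply hf (measurableSet_singleton y)]
    exact (Set.subsingleton_singleton.preimage hinj).measure_zero μ

section Signal

open Matrix MvPolynomial

variable {T m : ℕ} {n : Fin m → ℕ} (e : (Σ i, Fin (n i)) ≃ Fin T)
  (B : (i : Fin m) → Fin (n i) → Matrix (Fin T) (Fin T) ℂ)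

/-- The matrix `Λ = [A₁, …, A_m]`, `Aᵢ = [B_{i,1} ξᵢ, …, B_{i,nᵢ} ξᵢ]`, with its columns
enumerated through `e`. -/
def signalMatrix (ξ : Fin m → Fin T → ℂ) : Matrix (Fin T) (Fin T) ℂ :=
  of fun t s => (B (e.symm s).1 (e.symm s).2 *ᵥ ξ (e.symm s).1) t

noncomputable def signalPolyMatrix : Matrix (Fin T) (Fin T) (MvPolynomial (Fin m × Fin T) ℂ) :=
  of fun t s => C (B (e.symm s).1 (e.symm s).2 t t) * X ((e.symm s).1, t)

variable {B}

theorem signalMatrix_curry (hdiag : ∀ i k, (B i k).IsDiag) (x : Fin m × Fin T → ℂ) :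
    signalMatrix e B (Function.curry x) = (signalPolyMatrix e B).map (eval x) := by
  ext t s
  simp [signalMatrix, signalPolyMatrix, (hdiag _ _).mulVec_apply, Function.curry]

theorem det_signalMatrix_blockIndicator_ne_zero (hdiag : ∀ i k, (B i k).IsDiag)
    (hB : ∀ (i : Fin m) (s : ℕ) (ρ : Fin s → Fin T) (σ : Fin s → Fin (n i)),
      Function.Injective ρ → Function.Injective σ →
      IsUnit (Matrix.det (Matrix.of fun a b => (B i (σ b)).mulVec 1 (ρ a)))) :
    (signalMatrix e B fun i t => if (e.symm t).1 = i then 1 else 0).det ≠ 0 := by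
  have hblock : (signalMatrix e B fun i t => if (e.symm t).1 = i then 1 else 0).submatrix e e =
      blockDiagonal' fun i => of fun a b => (B i b *ᵥ 1) (e ⟨i, a⟩) := by
    ext ⟨i, a⟩ ⟨j, b⟩
    simp only [submatrix_apply, signalMatrix, of_apply]
    rw [e.symm_apply_apply, (hdiag _ _).mulVec_apply, e.symm_apply_apply]
    by_cases h : i = j
    · subst h
      simp [(hdiag _ _).mulVec_apply]
    · simp [blockDiagonal'_apply_ne _ _ _ h, h]
  rw [← det_submatrix_equiv_self e, hblock, det_blockDiagonal']
  exact Finset.prod_ne_zero_iff.2 fun i _ => (hB i (n i) (fun a => e ⟨i, a⟩) id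
    (e.injective.comp sigma_mk_injective) Function.injective_id).ne_zero

end Signal

theorem stmt_10_general (T m : ℕ) (n : Fin m → ℕ)
    (e : (Σ i, Fin (n i)) ≃ Fin T)
    (B : (i : Fin m) → Fin (n i) → Matrix (Fin T) (Fin T) ℂ)
    (hdiag : ∀ i k, (B i k).IsDiag)
    -- every square submatrix of Bᵢ = [B_{i,1}·𝟙, …, B_{i,nᵢ}·𝟙] is invertible
    (hB : ∀ (i : Fin m) (s : ℕ) (ρ : Fin s → Fin T) (σ : Fin s → Fin (n i)),
      Function.Injective ρ → Function.Injective σ →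
      IsUnit (Matrix.det (Matrix.of fun a b => (B i (σ b)).mulVec 1 (ρ a))))
    -- the real and imaginary parts of all coordinates of the Ξᵢ are i.i.d. with common
    -- law ν absolutely continuous w.r.t. Lebesgue measure; this is modeled by the
    -- canonical product space Ω = Fin m → Fin T → ℝ × ℝ with the product measure
    (ν : Measure ℝ) [IsProbabilityMeasure ν] (hν : ν ≪ volume) :
    (Measure.pi fun _ : Fin m => Measure.pi fun _ : Fin T => ν.prod ν)
      {ω : Fin m → Fin T → ℝ × ℝ |
        IsUnit (Matrix.det (Matrix.of fun (t s : Fin T) =>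
          (B (e.symm s).1 (e.symm s).2).mulVec
            (fun u => Complex.mk (ω (e.symm s).1 u).1 (ω (e.symm s).1 u).2) t))} = 1 := by
  have : NullSingletonClass ν := ⟨fun x => hν (measure_singleton x)⟩
  set toComplex := Complex.measurableEquivRealProd.symm
  set μ : Measure ℂ := (ν.prod ν).map toComplex
  have : IsProbabilityMeasure μ :=
    Measure.isProbabilityMeasure_map toComplex.measurable.aemeasurable
  have : NullSingletonClass μ :=
    Measure.nullSingletonClass_map _ toComplex.measurable toComplex.injective
  have hΦ : MeasurePreserving (fun ω (p : Fin m × Fin T) => toComplex (ω p.1 p.2))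
      (Measure.pi fun _ : Fin m => Measure.pi fun _ : Fin T => ν.prod ν)
      (Measure.pi fun _ => μ) :=
    (measurePreserving_pi _ _ fun _ => ⟨toComplex.measurable, rfl⟩).comp
      (measurePreserving_uncurry _)
  have hgeneric : ∀ᵐ x ∂Measure.pi fun _ : Fin m × Fin T => μ,
      (signalMatrix e B (Function.curry x)).det ≠ 0 := by
    simp_rw [signalMatrix_curry e hdiag]
    refine MvPolynomial.ae_det_map_eval_ne_zero _ _
      (x₀ := fun p => if (e.symm p.2).1 = p.1 then 1 else 0) ?_
    rw [← signalMatrix_curry e hdiag]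
    exact det_signalMatrix_blockIndicator_ne_zero e hdiag hB
  rw [measure_congr (Filter.eventuallyEq_univ.2 ?_), measure_univ]
  filter_upwards [hΦ.quasiMeasurePreserving.ae hgeneric] with ω hω
  exact isUnit_iff_ne_zero.2 hω

theorem stmt_10 (T m : ℕ) (hm : 0 < m) (hT : 0 < T)
    (n : Fin m → ℕ) (hn : ∀ i, 0 < n i) (hsum : ∑ i, n i = T)
    (e : (Σ i, Fin (n i)) ≃ Fin T)
    (B : (i : Fin m) → Fin (n i) → Matrix (Fin T) (Fin T) ℂ)
    (hdiag : ∀ i k, (B i k).IsDiag)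
    -- every square submatrix of Bᵢ = [B_{i,1}·𝟙, …, B_{i,nᵢ}·𝟙] is invertible
    (hB : ∀ (i : Fin m) (s : ℕ) (ρ : Fin s → Fin T) (σ : Fin s → Fin (n i)),
      Function.Injective ρ → Function.Injective σ →
      IsUnit (Matrix.det (Matrix.of fun a b => (B i (σ b)).mulVec 1 (ρ a))))
    -- the real and imaginary parts of all coordinates of the Ξᵢ are i.i.d. with common
    -- law ν absolutely continuous w.r.t. Lebesgue measure; this is modeled by the
    -- canonical product space Ω = Fin m → Fin T → ℝ × ℝ with the product measure
    (ν : Measure ℝ) [IsProbabilityMeasure ν] (hν : ν ≪ volume) :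
    (Measure.pi fun _ : Fin m => Measure.pi fun _ : Fin T => ν.prod ν)
      {ω : Fin m → Fin T → ℝ × ℝ |
        IsUnit (Matrix.det (Matrix.of fun (t s : Fin T) =>
          (B (e.symm s).1 (e.symm s).2).mulVec
            (fun u => Complex.mk (ω (e.symm s).1 u).1 (ω (e.symm s).1 u).2) t))} = 1 :=
  stmt_10_general T m n e B hdiag hB ν hν
end

section
/- Let 𝒢 be a finite set of pairwise commuting invertible diagonal T × T complex matrices with |𝒢| = Γ, let η ∈ ℤ⁺, Ξ ∈ ℂ^T, and let U be the matrix with columns ∏_{G∈𝒢} G^{α_G} Ξ over α ∈ [η]^Γ and W the matrix with columns over α ∈ [η+1]^Γ. Then for every G₀ ∈ 𝒢, the column span of G₀·U is contained in the column span of W. -/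
/-!
Multiplying a monomial `∏_g G_g ^ (α_g + 1)` by `G_{g₀}` only raises the exponent of `G_{g₀}` by
one, because the `G_g` commute; the result is therefore again a column of `W`, with exponent
range enlarged from `[η]` to `[η + 1]` in the `g₀` coordinate.
-/

open scoped IsMulCommutative in
theorem Commute.mul_prod_ofFn_pow {M : Type*} [Monoid M] {n : ℕ} (f : Fin n → M)
    (hf : ∀ i j, Commute (f i) (f j)) (e : Fin n → ℕ) (i : Fin n) :
    f i * (List.ofFn fun j => f j ^ e j).prod =
      (List.ofFn fun j => f j ^ (e j + if j = i then 1 else 0)).prod := by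
  have := Submonoid.isMulCommutative_closure M (s := Set.range f) <| by
    rintro _ ⟨a, rfl⟩ _ ⟨b, rfl⟩
    exact (hf a b).eq
  let g : Fin n → Submonoid.closure (Set.range f) :=
    fun j => ⟨f j, Submonoid.subset_closure ⟨j, rfl⟩⟩
  have hprod : ∀ e' : Fin n → ℕ,
      (List.ofFn fun j => f j ^ e' j).prod = ((∏ j, g j ^ e' j : _) : M) := by
    intro e'
    rw [← List.prod_ofFn, Submonoid.coe_list_prod, List.map_ofFn]
    rfl
  have hshift : g i * ∏ j, g j ^ e j = ∏ j, g j ^ (e j + if j = i then 1 else 0) := by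
    simp only [pow_add, Finset.prod_mul_distrib, pow_ite, pow_one, pow_zero,
      Finset.prod_ite_eq', Finset.mem_univ, if_true, mul_comm]
  rw [hprod, hprod, ← hshift]
  rfl

theorem stmt_12_general (T Γ η : ℕ)
    (G : Fin Γ → Matrix (Fin T) (Fin T) ℂ)
    (hcomm : ∀ g g', Commute (G g) (G g'))
    (Ξ : Fin T → ℂ) (g₀ : Fin Γ) :
    Submodule.span ℂ
        (Set.range fun α : Fin Γ → Fin η =>
          (G g₀).mulVec ((List.ofFn fun g => G g ^ ((α g : ℕ) + 1)).prod.mulVec Ξ)) ≤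
      Submodule.span ℂ
        (Set.range fun α : Fin Γ → Fin (η + 1) =>
          (List.ofFn fun g => G g ^ ((α g : ℕ) + 1)).prod.mulVec Ξ) := by
  rw [Submodule.span_le]
  rintro _ ⟨α, rfl⟩
  refine Submodule.subset_span ⟨fun g => if g = g₀ then (α g).succ else (α g).castSucc, ?_⟩
  have hexp : ∀ g, (((if g = g₀ then (α g).succ else (α g).castSucc : Fin (η + 1)) : ℕ) + 1) =
      (α g : ℕ) + 1 + if g = g₀ then 1 else 0 := by
    intro g
    split_ifs <;> simp
  simp only [hexp, Matrix.mulVec_mulVec, Commute.mul_prod_ofFn_pow G hcomm]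

theorem stmt_12 (T Γ η : ℕ) (hΓ : 0 < Γ) (hη : 0 < η)
    (G : Fin Γ → Matrix (Fin T) (Fin T) ℂ)
    (hinj : Function.Injective G)
    (hcomm : ∀ g g', Commute (G g) (G g'))
    (hdiag : ∀ g, (G g).IsDiag)
    (hunit : ∀ g, IsUnit (G g))
    (Ξ : Fin T → ℂ) (g₀ : Fin Γ) :
    Submodule.span ℂ
        (Set.range fun α : Fin Γ → Fin η =>
          (G g₀).mulVec ((List.ofFn fun g => G g ^ ((α g : ℕ) + 1)).prod.mulVec Ξ)) ≤
      Submodule.span ℂ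
        (Set.range fun α : Fin Γ → Fin (η + 1) =>
          (List.ofFn fun g => G g ^ ((α g : ℕ) + 1)).prod.mulVec Ξ) :=
  stmt_12_general T Γ η G hcomm Ξ g₀
end

section
/- In the converse counting for the paper's network: for fixed distinct j,k ∈ [K̃], the set of message indices appearing in the pair-(j,k) bound, namely {(p,ℓ) : p ∈ R_j, ℓ ∈ [K̃]\{j}} ∪ {(p,k) : p ∈ [K]\(T_k ∪ R_j)}, has cardinality r(K̃−1) + (K − 2r), and, over all K̃(K̃−1) ordered pairs (j,k) with j≠k, every message index (p,ℓ) with p ∉ R_ℓ appears in exactly 2K̃−3 of these sets. -/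
lemma card_filter_prod {α β : Type*} [Fintype α] [Fintype β] [DecidableEq α] [DecidableEq β]
    (p : α → Prop) (q : β → Prop) [DecidablePred p] [DecidablePred q] :
    (Finset.univ.filter fun x : α × β => p x.1 ∧ q x.2).card
      = (Finset.univ.filter p).card * (Finset.univ.filter q).card := by
  rw [← Finset.univ_product_univ, Finset.filter_product, Finset.card_product]

-- number of nodes in a group: {p : Fin (Kt*r) | p / r = j} has r elements
lemma card_group (Kt r : ℕ) (hr : 0 < r) (j : ℕ) (hj : j < Kt) :
    (Finset.univ.filter fun p : Fin (Kt * r) => (p : ℕ) / r = j).card = r := by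
  apply Eq.trans (b := (Finset.univ : Finset (Fin r)).card)
  · refine Finset.card_bij' (fun p _ => (⟨(p : ℕ) % r, Nat.mod_lt _ hr⟩ : Fin r))
        (fun b _ => (⟨r * j + (b : ℕ), by
          have hb' : (b : ℕ) < r := b.isLt
          calc r * j + (b : ℕ) < r * j + r := by omega
            _ = r * (j + 1) := (Nat.mul_succ r j).symm
            _ ≤ r * Kt := Nat.mul_le_mul_left r hj
            _ = Kt * r := Nat.mul_comm r Kt⟩ : Fin (Kt * r))) ?_ ?_ ?_ ?_
    · intro a ha; exact Finset.mem_univ _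
    · intro b hb
      simp only [Finset.mem_filter, Finset.mem_univ, true_and]
      rw [Nat.mul_add_div hr, Nat.div_eq_of_lt b.isLt]
      omega
    · intro a ha
      simp only [Finset.mem_filter, Finset.mem_univ, true_and] at ha
      apply Fin.ext
      simp only
      conv_rhs => rw [← Nat.div_add_mod (a : ℕ) r]
      rw [ha]
    · intro b hb
      apply Fin.ext
      simp only
      rw [Nat.mul_add_mod, Nat.mod_eq_of_lt b.isLt]
  · simp

lemma card_ne_two {n : ℕ} (a b : Fin n) (hab : a ≠ b) :
    (Finset.univ.filter fun x : Fin n => x ≠ a ∧ x ≠ b).card = n - 2 := by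
  have h : (Finset.univ.filter fun x : Fin n => x ≠ a ∧ x ≠ b)
      = Finset.univ \ {a, b} := by
    ext x
    simp [not_or]
  rw [h, Finset.card_sdiff_of_subset (Finset.subset_univ _), Finset.card_univ, Fintype.card_fin,
    Finset.card_insert_of_notMem (by simp [hab]), Finset.card_singleton]

lemma card_eq_one' {n : ℕ} (a : Fin n) :
    (Finset.univ.filter fun x : Fin n => x = a).card = 1 := by
  simp [Finset.filter_eq']

lemma card_ne_one {n : ℕ} (a : Fin n) :
    (Finset.univ.filter fun x : Fin n => x ≠ a).card = n - 1 := by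
  rw [Finset.filter_ne', Finset.card_erase_of_mem (Finset.mem_univ _), Finset.card_univ,
    Fintype.card_fin]

theorem stmt_14 (Kt r K : ℕ) (hKt : 2 ≤ Kt) (hr : 0 < r) (hK : K = Kt * r)
    -- S j k is the index set of the pair-(j,k) bound: messages (p,ℓ) with p in Rx-group j
    -- and ℓ ≠ j, together with messages (p,k) with p outside T_k ∪ R_j
    -- (node p belongs to group p / r, groups being blocks of r consecutive nodes)
    (S : Fin Kt → Fin Kt → Finset (Fin K × Fin Kt))
    (hS : ∀ j k, S j k =
      Finset.univ.filter fun m : Fin K × Fin Kt =>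
        ((m.1 : ℕ) / r = (j : ℕ) ∧ m.2 ≠ j) ∨
        (m.2 = k ∧ (m.1 : ℕ) / r ≠ (k : ℕ) ∧ (m.1 : ℕ) / r ≠ (j : ℕ))) :
    -- cardinality of each per-pair set
    (∀ j k : Fin Kt, j ≠ k → (S j k).card = r * (Kt - 1) + (K - 2 * r)) ∧
    -- each message index (p,ℓ) with p outside Rx-group ℓ appears in exactly 2K̃ − 3
    -- of the K̃(K̃−1) per-pair sets
    (∀ (p : Fin K) (ℓ : Fin Kt), (p : ℕ) / r ≠ (ℓ : ℕ) →
      (Finset.univ.filter fun q : Fin Kt × Fin Kt =>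
          q.1 ≠ q.2 ∧ (p, ℓ) ∈ S q.1 q.2).card = 2 * Kt - 3) := by
  subst hK
  constructor
  · intro j k hjk
    rw [hS, Finset.filter_or, Finset.card_union_of_disjoint]
    · -- card of each piece
      have hA : (Finset.univ.filter fun m : Fin (Kt * r) × Fin Kt =>
          (m.1 : ℕ) / r = (j : ℕ) ∧ m.2 ≠ j).card = r * (Kt - 1) := by
        rw [card_filter_prod (fun a : Fin (Kt * r) => (a : ℕ) / r = (j : ℕ))
          (fun b : Fin Kt => b ≠ j), card_group Kt r hr (j : ℕ) j.isLt, card_ne_one]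
      have hB : (Finset.univ.filter fun m : Fin (Kt * r) × Fin Kt =>
          m.2 = k ∧ (m.1 : ℕ) / r ≠ (k : ℕ) ∧ (m.1 : ℕ) / r ≠ (j : ℕ)).card
          = Kt * r - 2 * r := by
        rw [Finset.filter_congr (q := fun m : Fin (Kt * r) × Fin Kt =>
            ((m.1 : ℕ) / r ≠ (k : ℕ) ∧ (m.1 : ℕ) / r ≠ (j : ℕ)) ∧ m.2 = k)
            (fun m _ => by tauto)]
        rw [card_filter_prod (fun a : Fin (Kt * r) => (a : ℕ) / r ≠ (k : ℕ) ∧ (a : ℕ) / r ≠ (j : ℕ))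
          (fun b : Fin Kt => b = k), card_eq_one', mul_one]
        -- count p with p/r ≠ k and p/r ≠ j
        have h1 : (Finset.univ.filter fun p : Fin (Kt * r) =>
            (p : ℕ) / r ≠ (k : ℕ) ∧ (p : ℕ) / r ≠ (j : ℕ))
            = Finset.univ \ ((Finset.univ.filter fun p : Fin (Kt * r) => (p : ℕ) / r = (k : ℕ))
              ∪ (Finset.univ.filter fun p : Fin (Kt * r) => (p : ℕ) / r = (j : ℕ))) := by
          ext x; simp [not_or]
        rw [h1, Finset.card_sdiff_of_subset (Finset.subset_univ _), Finset.card_univ, Fintype.card_fin,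
          Finset.card_union_of_disjoint, card_group Kt r hr _ k.isLt,
          card_group Kt r hr _ j.isLt]
        · omega
        · rw [Finset.disjoint_left]
          intro a ha hb
          simp only [Finset.mem_filter, Finset.mem_univ, true_and] at ha hb
          exact hjk (Fin.ext (by omega))
      rw [hA, hB]
    · rw [Finset.disjoint_left]
      intro a ha hb
      simp only [Finset.mem_filter, Finset.mem_univ, true_and] at ha hb
      exact hb.2.2 ha.1
  · intro p ℓ hpl
    have hg : (p : ℕ) / r < Kt := (Nat.div_lt_iff_lt_mul hr).2 (by
      have := p.isLt; omega)
    obtain ⟨g, hgdef⟩ : ∃ g, (p : ℕ) / r = g := ⟨_, rfl⟩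
    rw [hgdef] at hpl hg
    have hgfℓ : (⟨g, hg⟩ : Fin Kt) ≠ ℓ := by
      intro h
      exact hpl (by rw [← h])
    have key : (Finset.univ.filter fun q : Fin Kt × Fin Kt =>
          q.1 ≠ q.2 ∧ (p, ℓ) ∈ S q.1 q.2)
        = (Finset.univ.filter fun q : Fin Kt × Fin Kt => q.1 = ⟨g, hg⟩ ∧ q.2 ≠ ⟨g, hg⟩)
          ∪ (Finset.univ.filter fun q : Fin Kt × Fin Kt =>
              q.2 = ℓ ∧ (q.1 ≠ ⟨g, hg⟩ ∧ q.1 ≠ ℓ)) := by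
      ext q
      simp only [Finset.mem_union, Finset.mem_filter, Finset.mem_univ, true_and, hS,
        ne_eq, Fin.ext_iff, hgdef, Fin.val_mk]
      have : g ≠ (ℓ : ℕ) := hpl
      omega
    rw [key, Finset.card_union_of_disjoint]
    · rw [card_filter_prod (fun a : Fin Kt => a = ⟨g, hg⟩) (fun b : Fin Kt => b ≠ ⟨g, hg⟩),
        Finset.filter_congr (q := fun q : Fin Kt × Fin Kt =>
          (q.1 ≠ ⟨g, hg⟩ ∧ q.1 ≠ ℓ) ∧ q.2 = ℓ) (fun m _ => by tauto),
        card_filter_prod (fun a : Fin Kt => a ≠ ⟨g, hg⟩ ∧ a ≠ ℓ) (fun b : Fin Kt => b = ℓ),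
        card_eq_one', card_ne_one, card_ne_two _ _ hgfℓ, card_eq_one']
      omega
    · rw [Finset.disjoint_left]
      intro a ha hb
      simp only [Finset.mem_filter, Finset.mem_univ, true_and] at ha hb
      exact hb.2.1 ha.1
end

section
/- For positive integers K, r with r ∣ K, K/r ≥ 4, the IA-based NDT value (1 − r/K)/[(K(K−r) − r²)/(2K − 3r)] is strictly smaller than the one-shot NDT value (1 − r/K)/(2r). -/
theorem stmt_16 (K r : ℕ) (hK : 0 < K) (hr : 0 < r) (hdvd : r ∣ K)
    (h4 : 4 ≤ K / r) :
    (1 - (r : ℝ) / K) /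
        (((K : ℝ) * ((K : ℝ) - (r : ℝ)) - (r : ℝ) ^ 2) / (2 * (K : ℝ) - 3 * (r : ℝ)))
      < (1 - (r : ℝ) / K) / (2 * (r : ℝ)) := by
  obtain ⟨c, rfl⟩ := hdvd
  rw [Nat.mul_div_cancel_left _ hr] at h4
  have hc : (4 : ℝ) ≤ c := by exact_mod_cast h4
  have hrR : (0 : ℝ) < r := by exact_mod_cast hr
  have hKR : ((r * c : ℕ) : ℝ) = (r : ℝ) * c := by push_cast; ring
  rw [hKR]
  have hK4 : 4 * (r : ℝ) ≤ (r : ℝ) * c := by nlinarith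
  have hden : (0 : ℝ) < 2 * ((r : ℝ) * c) - 3 * r := by nlinarith
  have hnum : (0 : ℝ) < 1 - (r : ℝ) / ((r : ℝ) * c) := by
    rw [sub_pos, div_lt_one (by nlinarith)]
    nlinarith
  have hkey : 2 * (r : ℝ) <
      ((r : ℝ) * c * ((r : ℝ) * c - r) - (r : ℝ) ^ 2) / (2 * ((r : ℝ) * c) - 3 * r) := by
    rw [lt_div_iff₀ hden]
    nlinarith [sq_nonneg ((r:ℝ) * (c - 4)), sq_nonneg (r:ℝ)]
  exact div_lt_div_of_pos_left hnum (by positivity) hkey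
end
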